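/- Let f : R → R be (1/q)-Lipschitz and fix t ∈ R and a coset representative s of the residue field. Then the map F(x) = x + (at + φ(x) - f(x))/b, where φ(x) = b(x^q - x), maps the disc D_{1/q}(s) into itself, is (1/q)-Lipschitz on that disc, and hence has a unique fixed point x* ∈ D_{1/q}(s); this fixed point satisfies at + φ(x*) - f(x*) = 0. -/

import Mathlib

open scoped Classical
open MeasureTheory Filter

noncomputable section

/-- A complete, locally compact non-Archimedean field with residue field of
order `q`, absolute value normalized so that a uniformizer has norm `1/q`.
`reps` is a set of `q` coset representatives for the residue field: they cover
the ring of integers by discs of radius `1/q` and are pairwise at distance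
`> 1/q`. -/
structure NAField (K : Type*) [NormedField K] where
  na : IsNonarchimedean (fun x : K => ‖x‖)
  complete : CompleteSpace K
  locCompact : LocallyCompactSpace K
  q : ℕ
  one_lt_q : 1 < q
  valGroup : ∀ x : K, x ≠ 0 → ∃ n : ℤ, ‖x‖ = (q : ℝ) ^ n
  exists_unif : ∃ ϖ : K, ‖ϖ‖ = (q : ℝ)⁻¹
  reps : Finset K
  card_reps : reps.card = q
  norm_reps : ∀ s ∈ reps, ‖s‖ ≤ 1
  reps_cover : ∀ x : K, ‖x‖ ≤ 1 → ∃ s ∈ reps, ‖x - s‖ ≤ (q : ℝ)⁻¹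
  reps_sep : ∀ s ∈ reps, ∀ t ∈ reps, s ≠ t → (q : ℝ)⁻¹ < ‖s - t‖

variable {K : Type*} [NormedField K]

/-- `f : R → R` is `(1/q)`-Lipschitz on the ring of integers. -/
def NAField.IsLip (F : NAField K) (f : K → K) : Prop :=
  (∀ t : K, ‖t‖ ≤ 1 → ‖f t‖ ≤ 1) ∧
  ∀ t₁ t₂ : K, ‖t₁‖ ≤ 1 → ‖t₂‖ ≤ 1 → ‖f t₁ - f t₂‖ ≤ ((F.q : ℝ))⁻¹ * ‖t₁ - t₂‖

/-- The unit polydisc `R² ⊆ K²`. -/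
def unitPoly (K : Type*) [NormedField K] : Set (K × K) := {p | ‖p.1‖ ≤ 1 ∧ ‖p.2‖ ≤ 1}

/-- Horizontal `δ`-neighborhood `H_δ(f) = {(t, f t + θ) : t ∈ R, |θ| ≤ δ}`. -/
def Hnbhd (f : K → K) (δ : ℝ) : Set (K × K) :=
  {p | ∃ t θ : K, ‖t‖ ≤ 1 ∧ ‖θ‖ ≤ δ ∧ p = (t, f t + θ)}

/-- Vertical `δ`-neighborhood `V_δ(f) = {(f t + θ, t) : t ∈ R, |θ| ≤ δ}`. -/
def Vnbhd (f : K → K) (δ : ℝ) : Set (K × K) :=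
  {p | ∃ t θ : K, ‖t‖ ≤ 1 ∧ ‖θ‖ ≤ δ ∧ p = (f t + θ, t)}

/-- The automorphism `T(x,y) = (a y + b (x^q - x), x)`. -/
def NAField.Tmap (F : NAField K) (a b : K) : K × K → K × K :=
  fun p => (a * p.2 + b * (p.1 ^ F.q - p.1), p.1)

/-- The inverse automorphism `T⁻¹(x,y) = (y, a⁻¹ (x - b (y^q - y)))`. -/
def NAField.Tinv (F : NAField K) (a b : K) : K × K → K × K :=
  fun p => (p.2, a⁻¹ * (p.1 - b * (p.2 ^ F.q - p.2)))

/-- The attractor `A_T = ⋂_{n ≥ 1} Tⁿ(R²)`. -/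
def NAField.Attractor (F : NAField K) (a b : K) : Set (K × K) :=
  ⋂ n ∈ {n : ℕ | 1 ≤ n}, (F.Tmap a b)^[n] '' unitPoly K

/-- The basin of attraction `B_T = ⋃_{n ≥ 1} T⁻ⁿ(R²)`. -/
def NAField.Basin (F : NAField K) (a b : K) : Set (K × K) :=
  ⋃ n ∈ {n : ℕ | 1 ≤ n}, (F.Tmap a b)^[n] ⁻¹' unitPoly K

/-- `T^k` for `k : ℤ`. -/
def NAField.iterZ (F : NAField K) (a b : K) (k : ℤ) : K × K → K × K :=
  if 0 ≤ k then (F.Tmap a b)^[k.toNat] else (F.Tinv a b)^[(-k).toNat]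

/-- The image under the conjugacy `ω` of the cylinder set of bisequences
agreeing with `s` on coordinates `-M, …, M`: points of the attractor whose
itinerary through the residue strips matches `s` on those coordinates. -/
def NAField.Cyl (F : NAField K) (a b : K) (s : ℤ → K) (M : ℕ) : Set (K × K) :=
  {p | p ∈ F.Attractor a b ∧
    ∀ k : ℤ, |k| ≤ (M : ℤ) → ‖(F.iterZ a b k p).1 - s k‖ ≤ ((F.q : ℝ))⁻¹}

/-! Since the residue field has `q` elements, `x ^ q ≡ x` modulo the maximal ideal for every
integer `x`. Moreover `x ^ q - y ^ q = (x - y) ∑ xⁱ y^(q-1-i)`, and for `x ≡ y` the sum is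
`≡ q y^(q-1) ≡ 0`, so `x ↦ x ^ q` is `q⁻¹`-Lipschitz on each residue disc. As `|b| = q`, the
map `x ↦ x + (a t + b (x ^ q - x) - f x) / b = x ^ q + (a t - f x) / b` therefore moves every
integer by at most `q⁻¹`, so it maps the disc `D_{1/q}(s)` into itself and contracts it by the
factor `q⁻¹`; the Banach fixed point theorem applies, and a fixed point is exactly a zero of
the numerator. -/

theorem LipschitzOnWith.existsUnique_isFixedPt {α : Type*} [MetricSpace α] {f : α → α}
    {s : Set α} {L : NNReal} (hf : LipschitzOnWith L f s) (hL : L < 1) (hsc : IsComplete s)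
    (hne : s.Nonempty) (hsf : Set.MapsTo f s s) : ∃! x, x ∈ s ∧ Function.IsFixedPt f x := by
  have hcontr : ContractingWith L (hsf.restrict f s s) := ⟨hL, fun x y => hf x.2 y.2⟩
  obtain ⟨x, hxs, hfix, -⟩ := hcontr.exists_fixedPoint' hsc hsf hne.some_mem (edist_ne_top _ _)
  refine ⟨x, ⟨hxs, hfix⟩, fun y ⟨hys, hyfix⟩ => ?_⟩
  have hdist : dist y x ≤ L * dist y x := by
    simpa only [hyfix.eq, hfix.eq] using hf.dist_le_mul y hys x hxs
  have hL' : (L : ℝ) < 1 := hL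
  exact dist_le_zero.1 (by nlinarith [dist_nonneg (x := y) (y := x)])

open IsLocalRing

namespace IsLocalRing

variable {R : Type*} [CommRing R] [IsLocalRing R] [Finite (ResidueField R)]

theorem pow_natCard_residueField_sub_self_mem (x : R) :
    x ^ Nat.card (ResidueField R) - x ∈ maximalIdeal R := by
  have := Fintype.ofFinite (ResidueField R)
  rw [← residue_eq_zero_iff, map_sub, map_pow, Nat.card_eq_fintype_card, FiniteField.pow_card,
    sub_self]

theorem geom_sum₂_natCard_residueField_mem {x y : R} (hxy : x - y ∈ maximalIdeal R) :
    ∑ i ∈ Finset.range (Nat.card (ResidueField R)),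
      x ^ i * y ^ (Nat.card (ResidueField R) - 1 - i) ∈ maximalIdeal R := by
  have := Fintype.ofFinite (ResidueField R)
  have hres : residue R x = residue R y := Ideal.Quotient.eq.2 hxy
  rw [← residue_eq_zero_iff, map_sum]
  simp only [map_mul, map_pow, hres]
  rw [geom_sum₂_self, Nat.card_eq_fintype_card, FiniteField.cast_card_eq_zero, zero_mul]

end IsLocalRing

local notation "𝒪" => Valuation.valuationSubring (NormedField.valuation (K := K))

namespace NormedField

variable [IsUltrametricDist K]

theorem mem_valuationSubring_iff {x : K} : x ∈ 𝒪 ↔ ‖x‖ ≤ 1 := by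
  rw [Valuation.mem_valuationSubring_iff, valuation_apply, ← NNReal.coe_le_coe, coe_nnnorm,
    NNReal.coe_one]

theorem mem_maximalIdeal_valuationSubring_iff {x : 𝒪} : x ∈ maximalIdeal 𝒪 ↔ ‖(x : K)‖ < 1 := by
  rw [Valuation.mem_maximalIdeal_iff, valuation_apply, ← NNReal.coe_lt_coe, coe_nnnorm,
    NNReal.coe_one]

theorem norm_pow_natCard_residueField_sub_self_lt_one [Finite (ResidueField 𝒪)] {x : K}
    (hx : ‖x‖ ≤ 1) :
    ‖x ^ Nat.card (ResidueField 𝒪) - x‖ < 1 :=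
  mem_maximalIdeal_valuationSubring_iff.1
    (pow_natCard_residueField_sub_self_mem (⟨x, mem_valuationSubring_iff.2 hx⟩ : 𝒪))

theorem norm_geom_sum₂_natCard_residueField_lt_one [Finite (ResidueField 𝒪)] {x y : K}
    (hx : ‖x‖ ≤ 1) (hy : ‖y‖ ≤ 1) (hxy : ‖x - y‖ < 1) :
    ‖∑ i ∈ Finset.range (Nat.card (ResidueField 𝒪)),
      x ^ i * y ^ (Nat.card (ResidueField 𝒪) - 1 - i)‖ < 1 := by
  set X : 𝒪 := ⟨x, mem_valuationSubring_iff.2 hx⟩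
  set Y : 𝒪 := ⟨y, mem_valuationSubring_iff.2 hy⟩
  have := geom_sum₂_natCard_residueField_mem (x := X) (y := Y)
    (mem_maximalIdeal_valuationSubring_iff.2 hxy)
  simpa [X, Y] using mem_maximalIdeal_valuationSubring_iff.1 this

end NormedField

namespace NAField

theorem isUltrametricDist (F : NAField K) : IsUltrametricDist K :=
  IsUltrametricDist.isUltrametricDist_of_isNonarchimedean_norm F.na

variable {F : NAField K}

theorem one_lt_q_real : (1 : ℝ) < F.q := by exact_mod_cast F.one_lt_q

theorem inv_q_lt_one : (F.q : ℝ)⁻¹ < 1 := inv_lt_one_of_one_lt₀ one_lt_q_real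

/-- The value group is `q ^ ℤ`, so there is nothing strictly between `q⁻¹` and `1`. -/
theorem norm_le_inv_q_of_norm_lt_one {x : K} (hx : ‖x‖ < 1) : ‖x‖ ≤ (F.q : ℝ)⁻¹ := by
  rcases eq_or_ne x 0 with rfl | hx0
  · simp
  obtain ⟨n, hn⟩ := F.valGroup x hx0
  rw [hn, zpow_lt_one_iff_right₀ one_lt_q_real] at hx
  rw [hn, ← zpow_neg_one]
  exact zpow_le_zpow_right₀ one_lt_q_real.le (by omega)

theorem natCard_residueField (F : NAField K) [IsUltrametricDist K] :
    Nat.card (ResidueField 𝒪) = F.q := by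
  let rep : F.reps → ResidueField 𝒪 := fun s =>
    residue 𝒪 ⟨s, NormedField.mem_valuationSubring_iff.2 (F.norm_reps s s.2)⟩
  have hrep : Function.Bijective rep := by
    constructor
    · rintro ⟨s, hs⟩ ⟨t, ht⟩ hst
      by_contra hne
      have hlt : ‖s - t‖ < 1 := NormedField.mem_maximalIdeal_valuationSubring_iff.1
        (Ideal.Quotient.eq.1 hst)
      exact (F.reps_sep s hs t ht (fun h => hne (Subtype.ext h))).not_ge
        (norm_le_inv_q_of_norm_lt_one hlt)
    · intro y
      obtain ⟨x, rfl⟩ := residue_surjective y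
      obtain ⟨s, hs, hxs⟩ := F.reps_cover x (NormedField.mem_valuationSubring_iff.1 x.2)
      refine ⟨⟨s, hs⟩, Ideal.Quotient.eq.2 ?_⟩
      rw [NormedField.mem_maximalIdeal_valuationSubring_iff, ← norm_neg]
      simpa using hxs.trans_lt inv_q_lt_one
  rw [← Nat.card_eq_of_bijective rep hrep, Nat.card_eq_finsetCard, F.card_reps]

theorem finite_residueField (F : NAField K) [IsUltrametricDist K] : Finite (ResidueField 𝒪) :=
  Nat.finite_of_card_ne_zero (by rw [F.natCard_residueField]; exact F.one_lt_q.ne_bot)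

theorem norm_pow_q_sub_self_le {x : K} (hx : ‖x‖ ≤ 1) : ‖x ^ F.q - x‖ ≤ (F.q : ℝ)⁻¹ := by
  have := F.isUltrametricDist
  have := F.finite_residueField
  have hlt := NormedField.norm_pow_natCard_residueField_sub_self_lt_one hx
  rw [F.natCard_residueField] at hlt
  exact norm_le_inv_q_of_norm_lt_one hlt

theorem norm_pow_q_sub_pow_q_le {x y : K} (hx : ‖x‖ ≤ 1) (hy : ‖y‖ ≤ 1) (hxy : ‖x - y‖ < 1) :
    ‖x ^ F.q - y ^ F.q‖ ≤ (F.q : ℝ)⁻¹ * ‖x - y‖ := by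
  have := F.isUltrametricDist
  have := F.finite_residueField
  have hlt := NormedField.norm_geom_sum₂_natCard_residueField_lt_one hx hy hxy
  rw [F.natCard_residueField] at hlt
  rw [← geom_sum₂_mul, norm_mul]
  gcongr
  exact norm_le_inv_q_of_norm_lt_one hlt

theorem norm_le_one_of_norm_sub_le {x s : K} (hs : ‖s‖ ≤ 1) (hx : ‖x - s‖ ≤ (F.q : ℝ)⁻¹) :
    ‖x‖ ≤ 1 := by
  simpa using (F.na (x - s) s).trans (max_le (hx.trans inv_q_lt_one.le) hs)

theorem norm_sub_lt_one_of_norm_sub_le {x y s : K} (hx : ‖x - s‖ ≤ (F.q : ℝ)⁻¹)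
    (hy : ‖y - s‖ ≤ (F.q : ℝ)⁻¹) : ‖x - y‖ < 1 := by
  have hsplit : ‖x - y‖ ≤ max ‖x - s‖ ‖s - y‖ := by simpa using F.na (x - s) (s - y)
  rw [norm_sub_rev s] at hsplit
  exact (hsplit.trans (max_le hx hy)).trans_lt inv_q_lt_one

theorem existsUnique_isFixedPt_of_norm_sub_le {g : K → K} {s : K}
    (hmaps : ∀ x, ‖x - s‖ ≤ (F.q : ℝ)⁻¹ → ‖g x - s‖ ≤ (F.q : ℝ)⁻¹)
    (hlip : ∀ x y, ‖x - s‖ ≤ (F.q : ℝ)⁻¹ → ‖y - s‖ ≤ (F.q : ℝ)⁻¹ →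
      ‖g x - g y‖ ≤ (F.q : ℝ)⁻¹ * ‖x - y‖) :
    ∃! x, ‖x - s‖ ≤ (F.q : ℝ)⁻¹ ∧ g x = x := by
  have := F.complete
  simp_rw [← mem_closedBall_iff_norm]
  refine LipschitzOnWith.existsUnique_isFixedPt (L := (F.q : NNReal)⁻¹) ?_ ?_
    Metric.isClosed_closedBall.isComplete ⟨s, Metric.mem_closedBall_self (by positivity)⟩
    (fun x hx => mem_closedBall_iff_norm.2 (hmaps x (mem_closedBall_iff_norm.1 hx)))
  · refine LipschitzOnWith.of_dist_le_mul fun x hx y hy => ?_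
    simpa [dist_eq_norm] using
      hlip x y (mem_closedBall_iff_norm.1 hx) (mem_closedBall_iff_norm.1 hy)
  · exact inv_lt_one_of_one_lt₀ (by exact_mod_cast F.one_lt_q)

variable (F) in
def fixMap (a b t : K) (f : K → K) (x : K) : K :=
  x + (a * t + b * (x ^ F.q - x) - f x) / b

variable {a b t s : K} {f : K → K}

theorem fixMap_eq_self_iff (hb : b ≠ 0) {x : K} :
    F.fixMap a b t f x = x ↔ a * t + b * (x ^ F.q - x) - f x = 0 := by
  simp [fixMap, hb]

theorem norm_fixMap_sub_le (ha : ‖a‖ ≤ 1) (hb : (F.q : ℝ) ≤ ‖b‖) (hf : F.IsLip f) (ht : ‖t‖ ≤ 1)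
    (hs : ‖s‖ ≤ 1) {x : K} (hx : ‖x - s‖ ≤ (F.q : ℝ)⁻¹) :
    ‖F.fixMap a b t f x - s‖ ≤ (F.q : ℝ)⁻¹ := by
  have hq : (0 : ℝ) < F.q := one_pos.trans one_lt_q_real
  have hb0 : b ≠ 0 := norm_pos_iff.1 (hq.trans_le hb)
  have hx1 : ‖x‖ ≤ 1 := norm_le_one_of_norm_sub_le hs hx
  have hsplit : F.fixMap a b t f x - s = ((x - s) + (x ^ F.q - x)) + (a * t - f x) / b := by
    simp only [fixMap]
    field_simp
    ring
  have hnum : ‖a * t - f x‖ ≤ 1 := by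
    rw [sub_eq_add_neg]
    refine (F.na _ _).trans (max_le ?_ ?_)
    · simpa [norm_mul] using mul_le_one₀ ha (norm_nonneg t) ht
    · simpa using hf.1 x hx1
  have hquot : ‖(a * t - f x) / b‖ ≤ (F.q : ℝ)⁻¹ := by
    rw [norm_div, ← one_div]
    exact div_le_div₀ zero_le_one hnum hq hb
  rw [hsplit]
  exact (F.na _ _).trans
    (max_le ((F.na _ _).trans (max_le hx (norm_pow_q_sub_self_le hx1))) hquot)

theorem norm_fixMap_sub_fixMap_le (hb : 1 ≤ ‖b‖) (hf : F.IsLip f) (hs : ‖s‖ ≤ 1) {x y : K}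
    (hx : ‖x - s‖ ≤ (F.q : ℝ)⁻¹) (hy : ‖y - s‖ ≤ (F.q : ℝ)⁻¹) :
    ‖F.fixMap a b t f x - F.fixMap a b t f y‖ ≤ (F.q : ℝ)⁻¹ * ‖x - y‖ := by
  have hb0 : b ≠ 0 := norm_pos_iff.1 (one_pos.trans_le hb)
  have hx1 : ‖x‖ ≤ 1 := norm_le_one_of_norm_sub_le hs hx
  have hy1 : ‖y‖ ≤ 1 := norm_le_one_of_norm_sub_le hs hy
  have hsplit : F.fixMap a b t f x - F.fixMap a b t f y
      = (x ^ F.q - y ^ F.q) + (f y - f x) / b := by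
    simp only [fixMap]
    field_simp
    ring
  have hquot : ‖(f y - f x) / b‖ ≤ (F.q : ℝ)⁻¹ * ‖x - y‖ := by
    rw [norm_div, norm_sub_rev x y]
    exact (div_le_self (norm_nonneg _) hb).trans (hf.2 y x hy1 hx1)
  rw [hsplit]
  exact (F.na _ _).trans
    (max_le (norm_pow_q_sub_pow_q_le hx1 hy1 (norm_sub_lt_one_of_norm_sub_le hx hy)) hquot)

end NAField

theorem stmt9_general (F : NAField K) (a b : K) (ha : ‖a‖ < 1)
    (hb : ‖b‖ = (F.q : ℝ)) (f : K → K) (hf : F.IsLip f)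
    (t : K) (ht : ‖t‖ ≤ 1) (s : K) (hs : s ∈ F.reps) :
    (∀ x : K, ‖x - s‖ ≤ ((F.q : ℝ))⁻¹ →
        ‖(x + (a * t + b * (x ^ F.q - x) - f x) / b) - s‖ ≤ ((F.q : ℝ))⁻¹) ∧
    (∀ x₁ x₂ : K, ‖x₁ - s‖ ≤ ((F.q : ℝ))⁻¹ → ‖x₂ - s‖ ≤ ((F.q : ℝ))⁻¹ →
        ‖(x₁ + (a * t + b * (x₁ ^ F.q - x₁) - f x₁) / b)
            - (x₂ + (a * t + b * (x₂ ^ F.q - x₂) - f x₂) / b)‖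
          ≤ ((F.q : ℝ))⁻¹ * ‖x₁ - x₂‖) ∧
    (∃! x : K, ‖x - s‖ ≤ ((F.q : ℝ))⁻¹ ∧
        x + (a * t + b * (x ^ F.q - x) - f x) / b = x) ∧
    (∀ x : K, ‖x - s‖ ≤ ((F.q : ℝ))⁻¹ →
        x + (a * t + b * (x ^ F.q - x) - f x) / b = x →
        a * t + b * (x ^ F.q - x) - f x = 0) := by
  have hs1 : ‖s‖ ≤ 1 := F.norm_reps s hs
  have hb1 : 1 ≤ ‖b‖ := hb ▸ NAField.one_lt_q_real.le
  have hmaps : ∀ x, ‖x - s‖ ≤ (F.q : ℝ)⁻¹ → ‖F.fixMap a b t f x - s‖ ≤ (F.q : ℝ)⁻¹ :=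
    fun x => NAField.norm_fixMap_sub_le ha.le hb.ge hf ht hs1
  have hlip : ∀ x₁ x₂, ‖x₁ - s‖ ≤ (F.q : ℝ)⁻¹ → ‖x₂ - s‖ ≤ (F.q : ℝ)⁻¹ →
      ‖F.fixMap a b t f x₁ - F.fixMap a b t f x₂‖ ≤ (F.q : ℝ)⁻¹ * ‖x₁ - x₂‖ :=
    fun _ _ => NAField.norm_fixMap_sub_fixMap_le hb1 hf hs1
  exact ⟨hmaps, hlip, NAField.existsUnique_isFixedPt_of_norm_sub_le hmaps hlip,
    fun x _ => (NAField.fixMap_eq_self_iff (norm_pos_iff.1 (one_pos.trans_le hb1))).1⟩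

theorem stmt9 (F : NAField K) (a b : K) (ha0 : a ≠ 0) (ha : ‖a‖ < 1)
    (hb : ‖b‖ = (F.q : ℝ)) (f : K → K) (hf : F.IsLip f)
    (t : K) (ht : ‖t‖ ≤ 1) (s : K) (hs : s ∈ F.reps) :
    (∀ x : K, ‖x - s‖ ≤ ((F.q : ℝ))⁻¹ →
        ‖(x + (a * t + b * (x ^ F.q - x) - f x) / b) - s‖ ≤ ((F.q : ℝ))⁻¹) ∧
    (∀ x₁ x₂ : K, ‖x₁ - s‖ ≤ ((F.q : ℝ))⁻¹ → ‖x₂ - s‖ ≤ ((F.q : ℝ))⁻¹ →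
        ‖(x₁ + (a * t + b * (x₁ ^ F.q - x₁) - f x₁) / b)
            - (x₂ + (a * t + b * (x₂ ^ F.q - x₂) - f x₂) / b)‖
          ≤ ((F.q : ℝ))⁻¹ * ‖x₁ - x₂‖) ∧
    (∃! x : K, ‖x - s‖ ≤ ((F.q : ℝ))⁻¹ ∧
        x + (a * t + b * (x ^ F.q - x) - f x) / b = x) ∧
    (∀ x : K, ‖x - s‖ ≤ ((F.q : ℝ))⁻¹ →
        x + (a * t + b * (x ^ F.q - x) - f x) / b = x →
        a * t + b * (x ^ F.q - x) - f x = 0) :=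
  stmt9_general F a b ha hb f hf t ht s hs
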